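/- Let G be a finite simple graph with vertex set {1,...,n}, G_j = G[{1,...,j}]. Suppose for every j ∈ {1,...,i} ∩ N(i+1) we have ω(G_j) < ω(G_i). Then G[{1,...,i} ∩ N(i+1)] contains no clique of size ω(G_i), and hence ω(G_{i+1}) = ω(G_i). -/

import Mathlib

open SimpleGraph

/-- Clique number of the subgraph of `G` induced by the vertex set `U`. -/
noncomputable def omegaOn {V : Type*} (G : SimpleGraph V) (U : Set V) : ℕ :=
  sSup {k | ∃ t : Finset V, ↑t ⊆ U ∧ G.IsNClique k t}

/-- A stable (independent) set of `G`. -/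
def IsStable {V : Type*} (G : SimpleGraph V) (s : Set V) : Prop :=
  ∀ u ∈ s, ∀ v ∈ s, ¬ G.Adj u v

/-- The vertex set `{1, ..., i}` of the `i`-th doll. -/
def Vi (i : ℕ) : Set ℕ := {v | 1 ≤ v ∧ v ≤ i}

/-!
A clique of size `ω(G_i)` inside `{1, …, i} ∩ N(i+1)` lies in `G_j` for its largest vertex `j`,
which contradicts `ω(G_j) < ω(G_i)`. Since every clique of `G_{i+1}` through `i + 1` is a clique
of `G[{1, …, i} ∩ N(i+1)]` plus the vertex `i + 1`, this gives `ω(G_{i+1}) ≤ ω(G_i)`.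
-/

namespace SimpleGraph

variable {V : Type*} {G : SimpleGraph V} {U W : Set V}

lemma bddAbove_cliqueSizes (hU : U.Finite) :
    BddAbove {k | ∃ t : Finset V, ↑t ⊆ U ∧ G.IsNClique k t} := by
  refine ⟨hU.toFinset.card, ?_⟩
  rintro k ⟨t, ht, hc⟩
  rw [← hc.card_eq]
  exact Finset.card_le_card (by simpa [← Finset.coe_subset] using ht)

lemma le_omegaOn (hU : U.Finite) {t : Finset V} {k : ℕ} (ht : ↑t ⊆ U) (hc : G.IsNClique k t) :
    k ≤ omegaOn G U :=
  le_csSup (bddAbove_cliqueSizes hU) ⟨t, ht, hc⟩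

lemma exists_isNClique_omegaOn (hU : U.Finite) :
    ∃ t : Finset V, (t : Set V) ⊆ U ∧ G.IsNClique (omegaOn G U) t :=
  Nat.sSup_mem (s := {k | ∃ t : Finset V, (t : Set V) ⊆ U ∧ G.IsNClique k t})
    ⟨0, ∅, by simp, by simp⟩ (bddAbove_cliqueSizes hU)

lemma omegaOn_mono (hW : W.Finite) (hUW : U ⊆ W) : omegaOn G U ≤ omegaOn G W := by
  obtain ⟨t, ht, hc⟩ := exists_isNClique_omegaOn (G := G) (hW.subset hUW)
  exact le_omegaOn hW (ht.trans hUW) hc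

lemma omegaOn_lt_of_forall_not_isNClique (hU : U.Finite) {k : ℕ}
    (h : ∀ t : Finset V, ↑t ⊆ U → ¬ G.IsNClique k t) : omegaOn G U < k := by
  obtain ⟨t, ht, hc⟩ := exists_isNClique_omegaOn (G := G) hU
  by_contra! hk
  obtain ⟨s, hst, hs⟩ := Finset.exists_subset_card_eq (hk.trans hc.card_eq.ge)
  exact h s ((Finset.coe_subset.2 hst).trans ht) ⟨hc.isClique.subset hst, hs⟩

lemma omegaOn_insert_le (hU : U.Finite) (v : V) :
    omegaOn G (insert v U) ≤ max (omegaOn G U) (omegaOn G (U ∩ G.neighborSet v) + 1) := by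
  classical
  obtain ⟨t, ht, hc⟩ := exists_isNClique_omegaOn (G := G) (hU.insert v)
  by_cases hv : v ∈ t
  · have hrest : ↑(t.erase v) ⊆ U ∩ G.neighborSet v := by
      intro x hx
      obtain ⟨hxv, hxt⟩ := Finset.mem_erase.1 hx
      exact ⟨(ht hxt).resolve_left hxv, hc.isClique hv hxt (Ne.symm hxv)⟩
    have := le_omegaOn (hU.subset Set.inter_subset_left) hrest (hc.erase_of_mem hv)
    omega
  · have ht' : ↑t ⊆ U := fun x hx => (ht hx).resolve_left (ne_of_mem_of_not_mem hx hv)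
    exact le_max_of_le_left (le_omegaOn hU ht' hc)

end SimpleGraph

lemma Vi_finite (i : ℕ) : (Vi i).Finite :=
  Set.finite_Icc 1 i

lemma Vi_succ (i : ℕ) : Vi (i + 1) = insert (i + 1) (Vi i) := by
  ext v
  simp only [Vi, Set.mem_insert_iff, Set.mem_ofPred_eq]
  omega

lemma Vi_mono {i j : ℕ} (h : i ≤ j) : Vi i ⊆ Vi j :=
  fun _ hv => ⟨hv.1, hv.2.trans h⟩

lemma one_le_omegaOn_Vi (G : SimpleGraph ℕ) {i : ℕ} (hi : 1 ≤ i) : 1 ≤ omegaOn G (Vi i) :=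
  le_omegaOn (Vi_finite i) (t := {i}) (by simpa [Vi] using hi) (isNClique_singleton.2 rfl)

lemma exists_mem_le_omegaOn_Vi_of_isNClique {G : SimpleGraph ℕ} {t : Finset ℕ} {k : ℕ}
    (hc : G.IsNClique k t) (hne : t.Nonempty) (hpos : ∀ x ∈ t, 1 ≤ x) :
    ∃ j ∈ t, k ≤ omegaOn G (Vi j) :=
  ⟨t.max' hne, t.max'_mem hne,
    le_omegaOn (Vi_finite _) (fun x hx => ⟨hpos x hx, t.le_max' x hx⟩) hc⟩

theorem russian_dolls_pruning_rule_two_general (G : SimpleGraph ℕ) (i : ℕ)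
    (hi1 : 1 ≤ i)
    (h : ∀ j ∈ Vi i ∩ G.neighborSet (i + 1), omegaOn G (Vi j) < omegaOn G (Vi i)) :
    (¬ ∃ t : Finset ℕ, ↑t ⊆ Vi i ∩ G.neighborSet (i + 1) ∧
        G.IsNClique (omegaOn G (Vi i)) t) ∧
    omegaOn G (Vi (i + 1)) = omegaOn G (Vi i) := by
  have no_clique : ¬ ∃ t : Finset ℕ, ↑t ⊆ Vi i ∩ G.neighborSet (i + 1) ∧
      G.IsNClique (omegaOn G (Vi i)) t := by
    rintro ⟨t, ht, hc⟩
    have hne : t.Nonempty := by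
      rw [← Finset.card_pos, hc.card_eq]
      exact one_le_omegaOn_Vi G hi1
    obtain ⟨j, hjt, hj⟩ := exists_mem_le_omegaOn_Vi_of_isNClique hc hne fun x hx => (ht hx).1.1
    exact (h j (ht hjt)).not_ge hj
  have hneighbors : omegaOn G (Vi i ∩ G.neighborSet (i + 1)) < omegaOn G (Vi i) :=
    omegaOn_lt_of_forall_not_isNClique ((Vi_finite i).subset Set.inter_subset_left)
      fun t ht hc => no_clique ⟨t, ht, hc⟩
  refine ⟨no_clique, le_antisymm ?_ (omegaOn_mono (Vi_finite _) (Vi_mono i.le_succ))⟩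
  rw [Vi_succ]
  exact (omegaOn_insert_le (Vi_finite i) _).trans (max_le le_rfl hneighbors)

theorem russian_dolls_pruning_rule_two (G : SimpleGraph ℕ) (n : ℕ) (i : ℕ)
    (hi1 : 1 ≤ i) (hi : i < n)
    (h : ∀ j ∈ Vi i ∩ G.neighborSet (i + 1), omegaOn G (Vi j) < omegaOn G (Vi i)) :
    (¬ ∃ t : Finset ℕ, ↑t ⊆ Vi i ∩ G.neighborSet (i + 1) ∧
        G.IsNClique (omegaOn G (Vi i)) t) ∧
    omegaOn G (Vi (i + 1)) = omegaOn G (Vi i) :=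
  russian_dolls_pruning_rule_two_general G i hi1 h
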